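/- arXiv:2209.12838 — 2 statements merged into one kernel-verified Lean document; each statement's English description precedes it below -/
import Mathlib

section
/- Fix i with 1 ≤ i ≤ n−1. Let v = s_1 ∘ s_2 ∘ ⋯ ∘ s_n (rightmost factor applied first), let u be an element of the subgroup of the orthogonal group of ℝ^n generated by {s_j : j ≠ 1} with u(α_j) a negative root for every j ≠ 1, and let u_i be an element of the subgroup generated by {s_j : j ∉ {1, i}} with u_i(α_j) a negative root for every j ∉ {1, i} (u and u_i are the longest elements of the corresponding parabolic Weyl groups). Set w_i = u_i ∘ u ∘ v. Then w_i(α_{n−1}) is a positive root and is not a simple root. -/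
set_option maxHeartbeats 1000000


open scoped InnerProductSpace

private lemma sRefl_invol {V : Type*} [NormedAddCommGroup V] [InnerProductSpace ℝ V]
    (b x : V) :
    (x - (2 * ⟪x, b⟫_ℝ / ⟪b, b⟫_ℝ) • b) -
      (2 * ⟪x - (2 * ⟪x, b⟫_ℝ / ⟪b, b⟫_ℝ) • b, b⟫_ℝ / ⟪b, b⟫_ℝ) • b = x := by
  by_cases hb : b = 0
  · simp [hb]
  · have h : ⟪b, b⟫_ℝ ≠ 0 := fun h => hb (inner_self_eq_zero.mp h)
    have key : 2 * ⟪x - (2 * ⟪x, b⟫_ℝ / ⟪b, b⟫_ℝ) • b, b⟫_ℝ / ⟪b, b⟫_ℝ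
        = -(2 * ⟪x, b⟫_ℝ / ⟪b, b⟫_ℝ) := by
      rw [inner_sub_left, real_inner_smul_left]
      field_simp
      ring
    rw [key, neg_smul, sub_neg_eq_add, sub_add_cancel]

/-- The reflection `s_b : x ↦ x - (2⟪x,b⟫/⟪b,b⟫) • b`, as a permutation of `V`. -/
noncomputable def sRefl {V : Type*} [NormedAddCommGroup V] [InnerProductSpace ℝ V]
    (b : V) : Equiv.Perm V where
  toFun x := x - (2 * ⟪x, b⟫_ℝ / ⟪b, b⟫_ℝ) • b
  invFun x := x - (2 * ⟪x, b⟫_ℝ / ⟪b, b⟫_ℝ) • b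
  left_inv x := sRefl_invol b x
  right_inv x := sRefl_invol b x

/-- `E n i` is the `i`-th standard basis vector of `ℝ^n` (for indices `1 ≤ i ≤ n`). -/
noncomputable def E (n i : ℕ) : EuclideanSpace ℝ (Fin n) :=
  if h : 1 ≤ i ∧ i ≤ n then EuclideanSpace.single (⟨i - 1, by omega⟩ : Fin n) 1 else 0

/-- The simple roots of type `Cₙ` (indexed by `1 ≤ i ≤ n`):
`αᵢ = eᵢ - eᵢ₊₁` for `i ≤ n - 1` and `αₙ = 2eₙ`. -/
noncomputable def alphaC (n i : ℕ) : EuclideanSpace ℝ (Fin n) :=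
  if i = n then (2 : ℝ) • E n n else E n i - E n (i + 1)

/-- The roots of type `Cₙ`: `±eᵢ ± eⱼ` (`1 ≤ i < j ≤ n`) and `±2eᵢ` (`1 ≤ i ≤ n`). -/
def RootC (n : ℕ) : Set (EuclideanSpace ℝ (Fin n)) :=
  {x | (∃ i j, 1 ≤ i ∧ i < j ∧ j ≤ n ∧
      (x = E n i + E n j ∨ x = -(E n i + E n j) ∨ x = E n i - E n j ∨ x = E n j - E n i)) ∨
    (∃ i, 1 ≤ i ∧ i ≤ n ∧ (x = (2 : ℝ) • E n i ∨ x = -((2 : ℝ) • E n i)))}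

/-- A positive root of type `Cₙ`: a root which is a nonnegative integer combination of
the simple roots. -/
def IsPosC (n : ℕ) (x : EuclideanSpace ℝ (Fin n)) : Prop :=
  x ∈ RootC n ∧ ∃ c : ℕ → ℕ, x = ∑ i ∈ Finset.Icc 1 n, (c i : ℝ) • alphaC n i

/-- A negative root of type `Cₙ`: the negative of a positive root. -/
def IsNegC (n : ℕ) (x : EuclideanSpace ℝ (Fin n)) : Prop :=
  IsPosC n (-x)

/-- The simple reflections `sᵢ = s_{αᵢ}` of type `Cₙ`. -/
noncomputable def sC (n i : ℕ) : Equiv.Perm (EuclideanSpace ℝ (Fin n)) :=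
  sRefl (alphaC n i)

/-- `v = s₁ ∘ s₂ ∘ ⋯ ∘ sₙ` (rightmost factor applied first);
recall that in `Equiv.Perm` the product `f * g` is the composition `f ∘ g`. -/
noncomputable def vC (n : ℕ) : Equiv.Perm (EuclideanSpace ℝ (Fin n)) :=
  ((List.range n).map fun k => sC n (k + 1)).prod

section addenda
open Finset

variable {n : ℕ}

private lemma E_inner (n a b : ℕ) (ha1 : 1 ≤ a) (ha2 : a ≤ n) (hb1 : 1 ≤ b) (hb2 : b ≤ n) :
    ⟪E n a, E n b⟫_ℝ = if a = b then 1 else 0 := by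
  rw [E, E, dif_pos ⟨ha1, ha2⟩, dif_pos ⟨hb1, hb2⟩, EuclideanSpace.inner_single_left,
    EuclideanSpace.single_apply]
  simp only [map_one, one_mul]
  by_cases h : a = b
  · simp [h]
  · rw [if_neg h, if_neg (by simp [Fin.ext_iff]; omega)]

private lemma sRefl_apply {V : Type*} [NormedAddCommGroup V] [InnerProductSpace ℝ V] (b x : V) :
    sRefl b x = x - (2 * ⟪x, b⟫_ℝ / ⟪b, b⟫_ℝ) • b := rfl

private def GoodP {V : Type*} [NormedAddCommGroup V] [InnerProductSpace ℝ V]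
    (g : Equiv.Perm V) : Prop :=
  (∀ x y, g (x + y) = g x + g y) ∧ (∀ (a : ℝ) x, g (a • x) = a • g x) ∧
    (∀ x y, ⟪g x, g y⟫_ℝ = ⟪x, y⟫_ℝ)

private lemma sRefl_good {V : Type*} [NormedAddCommGroup V] [InnerProductSpace ℝ V] (b : V) :
    GoodP (sRefl b) := by
  refine ⟨fun x y => ?_, fun a x => ?_, fun x y => ?_⟩
  · simp only [sRefl_apply, inner_add_left]
    rw [mul_add, add_div, add_smul]
    abel
  · simp only [sRefl_apply, real_inner_smul_left]
    rw [show 2 * (a * ⟪x, b⟫_ℝ) / ⟪b, b⟫_ℝ = a * (2 * ⟪x, b⟫_ℝ / ⟪b, b⟫_ℝ) by ring,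
      mul_smul, smul_sub]
  · by_cases hb : b = 0
    · simp [hb, sRefl_apply]
    · have hB : ⟪b, b⟫_ℝ ≠ 0 := fun h => hb (inner_self_eq_zero.mp h)
      simp only [sRefl_apply, inner_sub_left, inner_sub_right, real_inner_smul_left,
        real_inner_smul_right]
      rw [real_inner_comm b y]
      field_simp
      ring

private lemma closure_good {V : Type*} [NormedAddCommGroup V] [InnerProductSpace ℝ V]
    {S : Set (Equiv.Perm V)} (hS : ∀ g ∈ S, ∃ b, g = sRefl b)
    {u : Equiv.Perm V} (hu : u ∈ Subgroup.closure S) : GoodP u := by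
  induction hu using Subgroup.closure_induction with
  | mem g hg => obtain ⟨b, rfl⟩ := hS g hg; exact sRefl_good b
  | one => exact ⟨fun _ _ => rfl, fun _ _ => rfl, fun _ _ => rfl⟩
  | mul g h _ _ hg hh =>
    exact ⟨fun x y => by simp only [Equiv.Perm.mul_apply, hh.1, hg.1],
      fun a x => by simp only [Equiv.Perm.mul_apply, hh.2.1, hg.2.1],
      fun x y => by simp only [Equiv.Perm.mul_apply, hg.2.2, hh.2.2]⟩
  | inv g _ hg =>
    have h1 : ∀ x, g (g⁻¹ x) = x := fun x => g.apply_symm_apply x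
    have h2 : ∀ x, g⁻¹ (g x) = x := fun x => g.symm_apply_apply x
    refine ⟨fun x y => ?_, fun a x => ?_, fun x y => ?_⟩
    · conv_lhs => rw [← h1 x, ← h1 y, ← hg.1, h2]
    · conv_lhs => rw [← h1 x, ← hg.2.1, h2]
    · conv_lhs => rw [← hg.2.2, h1, h1]

private lemma closure_fix {V : Type*} [NormedAddCommGroup V] [InnerProductSpace ℝ V]
    {e : V} {S : Set (Equiv.Perm V)}
    (hS : ∀ g ∈ S, ∃ b, ⟪e, b⟫_ℝ = 0 ∧ g = sRefl b)
    {u : Equiv.Perm V} (hu : u ∈ Subgroup.closure S) : u e = e := by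
  induction hu using Subgroup.closure_induction with
  | mem g hg =>
    obtain ⟨b, hb, rfl⟩ := hS g hg
    rw [sRefl_apply, hb]
    simp
  | one => rfl
  | mul g h _ _ hg hh => rw [Equiv.Perm.mul_apply, hh, hg]
  | inv g _ hg => conv_lhs => rw [← hg, show ∀ x, g⁻¹ (g x) = x from fun x => g.symm_apply_apply x]

private lemma GoodP.sub {V : Type*} [NormedAddCommGroup V] [InnerProductSpace ℝ V]
    {g : Equiv.Perm V} (h : GoodP g) (x y : V) : g (x - y) = g x - g y := by
  rw [sub_eq_add_neg, ← neg_one_smul ℝ y, h.1, h.2.1, neg_one_smul, ← sub_eq_add_neg]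

private noncomputable def tvec (n : ℕ) : EuclideanSpace ℝ (Fin n) :=
  ∑ m ∈ Finset.Icc 1 n, ((n : ℝ) + 1 - m) • E n m

private lemma E_inner_tvec (a : ℕ) (ha1 : 1 ≤ a) (ha2 : a ≤ n) :
    ⟪E n a, tvec n⟫_ℝ = (n : ℝ) + 1 - a := by
  rw [tvec, inner_sum]
  rw [Finset.sum_eq_single a]
  · rw [real_inner_smul_right, E_inner n a a ha1 ha2 ha1 ha2, if_pos rfl, mul_one]
  · intro m hm hma
    rw [Finset.mem_Icc] at hm
    rw [real_inner_smul_right, E_inner n a m ha1 ha2 hm.1 hm.2, if_neg (fun h => hma h.symm),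
      mul_zero]
  · intro h
    exact absurd (Finset.mem_Icc.mpr ⟨ha1, ha2⟩) h

end addenda

section addenda2
open Finset

variable {n : ℕ}

private lemma alpha_tvec_pos (j : ℕ) (hj1 : 1 ≤ j) (hj2 : j ≤ n) :
    0 < ⟪alphaC n j, tvec n⟫_ℝ := by
  by_cases h : j = n
  · subst h
    rw [alphaC, if_pos rfl, real_inner_smul_left, E_inner_tvec j hj1 hj2]
    have : (j : ℝ) + 1 - j = 1 := by ring
    rw [this]; norm_num
  · rw [alphaC, if_neg h, inner_sub_left, E_inner_tvec j hj1 hj2,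
      E_inner_tvec (j + 1) (by omega) (by omega)]
    push_cast
    linarith

private lemma isPos_tvec_pos (x : EuclideanSpace ℝ (Fin n)) (hx : IsPosC n x) :
    0 < ⟪x, tvec n⟫_ℝ := by
  have hnonneg : 0 ≤ ⟪x, tvec n⟫_ℝ := by
    obtain ⟨-, c, rfl⟩ := hx
    rw [sum_inner]
    refine Finset.sum_nonneg fun j hj => ?_
    rw [Finset.mem_Icc] at hj
    rw [real_inner_smul_left]
    exact mul_nonneg (Nat.cast_nonneg _) (le_of_lt (alpha_tvec_pos j hj.1 hj.2))
  have hne : ⟪x, tvec n⟫_ℝ ≠ 0 := by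
    rcases hx.1 with ⟨a, b, ha, hab, hb, hc⟩ | ⟨a, ha, hb, hc⟩
    · have va := E_inner_tvec (n := n) a ha (by omega)
      have vb := E_inner_tvec (n := n) b (by omega) hb
      have car : (a : ℝ) < b := by exact_mod_cast hab
      have cbr : (b : ℝ) ≤ n := by exact_mod_cast hb
      have car1 : (1 : ℝ) ≤ a := by exact_mod_cast ha
      rcases hc with rfl | rfl | rfl | rfl <;>
        simp only [inner_add_left, inner_sub_left, inner_neg_left, va, vb] <;> intro h <;>
        linarith
    · have va := E_inner_tvec (n := n) a ha hb
      have cbr : (a : ℝ) ≤ n := by exact_mod_cast hb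
      rcases hc with rfl | rfl <;>
        simp only [inner_neg_left, real_inner_smul_left, va] <;> intro h <;> linarith
  exact lt_of_le_of_ne hnonneg (Ne.symm hne)

private lemma isNeg_cases (x : EuclideanSpace ℝ (Fin n)) (hx : IsNegC n x) :
    (∃ a b, 1 ≤ a ∧ a < b ∧ b ≤ n ∧ (x = -(E n a + E n b) ∨ x = E n b - E n a)) ∨
    (∃ a, 1 ≤ a ∧ a ≤ n ∧ x = -((2 : ℝ) • E n a)) := by
  have hpos := isPos_tvec_pos _ hx
  rcases hx.1 with ⟨a, b, ha, hab, hb, hc⟩ | ⟨a, ha, hb, hc⟩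
  · have va := E_inner_tvec (n := n) a ha (by omega)
    have vb := E_inner_tvec (n := n) b (by omega) hb
    have car : (a : ℝ) < b := by exact_mod_cast hab
    have cbr : (b : ℝ) ≤ n := by exact_mod_cast hb
    have car1 : (1 : ℝ) ≤ a := by exact_mod_cast ha
    rcases hc with hc | hc | hc | hc
    · exact Or.inl ⟨a, b, ha, hab, hb, Or.inl (by rw [← hc, neg_neg])⟩
    · exfalso
      rw [hc] at hpos
      simp only [inner_neg_left, inner_add_left, va, vb] at hpos
      linarith
    · exact Or.inl ⟨a, b, ha, hab, hb, Or.inr (by rw [← neg_sub, ← hc, neg_neg])⟩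
    · exfalso
      rw [hc] at hpos
      simp only [inner_sub_left, va, vb] at hpos
      linarith
  · have va := E_inner_tvec (n := n) a ha hb
    have cbr : (a : ℝ) ≤ n := by exact_mod_cast hb
    rcases hc with hc | hc
    · exact Or.inr ⟨a, ha, hb, by rw [← hc, neg_neg]⟩
    · exfalso
      rw [hc] at hpos
      simp only [inner_neg_left, real_inner_smul_left, va] at hpos
      linarith

end addenda2

section addenda3
open Finset

variable {n : ℕ}

private lemma sC_step (j : ℕ) (hj1 : 1 ≤ j) (hj2 : j + 2 ≤ n) :
    sC n j (E n (j + 1) + E n n) = E n j + E n n := by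
  have hα : alphaC n j = E n j - E n (j + 1) := by rw [alphaC, if_neg (by omega)]
  rw [sC, sRefl_apply, hα]
  have h1 : ⟪E n (j + 1) + E n n, E n j - E n (j + 1)⟫_ℝ = -1 := by
    rw [inner_add_left, inner_sub_right, inner_sub_right,
      E_inner n (j + 1) j (by omega) (by omega) hj1 (by omega), if_neg (by omega),
      E_inner n (j + 1) (j + 1) (by omega) (by omega) (by omega) (by omega), if_pos rfl,
      E_inner n n j (by omega) le_rfl hj1 (by omega), if_neg (by omega),
      E_inner n n (j + 1) (by omega) le_rfl (by omega) (by omega), if_neg (by omega)]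
    norm_num
  have h2 : ⟪E n j - E n (j + 1), E n j - E n (j + 1)⟫_ℝ = 2 := by
    rw [inner_sub_left, inner_sub_right, inner_sub_right,
      E_inner n j j hj1 (by omega) hj1 (by omega), if_pos rfl,
      E_inner n j (j + 1) hj1 (by omega) (by omega) (by omega), if_neg (by omega),
      E_inner n (j + 1) j (by omega) (by omega) hj1 (by omega), if_neg (by omega),
      E_inner n (j + 1) (j + 1) (by omega) (by omega) (by omega) (by omega), if_pos rfl]
    norm_num
  rw [h1, h2, show (2 * (-1) / 2 : ℝ) = -1 by norm_num]
  module

private lemma sC_fix (j : ℕ) (hj1 : 1 ≤ j) (hj2 : j + 1 ≤ n) :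
    sC n j (E n j + E n (j + 1)) = E n j + E n (j + 1) := by
  have hα : alphaC n j = E n j - E n (j + 1) := by rw [alphaC, if_neg (by omega)]
  rw [sC, sRefl_apply, hα]
  have h1 : ⟪E n j + E n (j + 1), E n j - E n (j + 1)⟫_ℝ = 0 := by
    rw [inner_add_left, inner_sub_right, inner_sub_right,
      E_inner n j j hj1 (by omega) hj1 (by omega), if_pos rfl,
      E_inner n j (j + 1) hj1 (by omega) (by omega) (by omega), if_neg (by omega),
      E_inner n (j + 1) j (by omega) (by omega) hj1 (by omega), if_neg (by omega),
      E_inner n (j + 1) (j + 1) (by omega) (by omega) (by omega) (by omega), if_pos rfl]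
    norm_num
  rw [h1]
  norm_num

private lemma sC_long (j : ℕ) (hj1 : 1 ≤ j) (hjn : j < n) :
    sC n n (E n j - E n n) = E n j + E n n := by
  have hα : alphaC n n = (2 : ℝ) • E n n := by rw [alphaC, if_pos rfl]
  rw [sC, sRefl_apply, hα]
  have h1 : ⟪E n j - E n n, (2 : ℝ) • E n n⟫_ℝ = -2 := by
    rw [real_inner_smul_right, inner_sub_left,
      E_inner n j n hj1 (by omega) (by omega) le_rfl, if_neg (by omega),
      E_inner n n n (by omega) le_rfl (by omega) le_rfl, if_pos rfl]
    norm_num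
  have h2 : ⟪(2 : ℝ) • E n n, (2 : ℝ) • E n n⟫_ℝ = 4 := by
    rw [real_inner_smul_right, real_inner_smul_left,
      E_inner n n n (by omega) le_rfl (by omega) le_rfl, if_pos rfl]
    norm_num
  rw [h1, h2, show (2 * (-2) / 4 : ℝ) = -1 by norm_num]
  module

private lemma vC_apply (hn : 3 ≤ n) : vC n (alphaC n (n - 1)) = E n 1 + E n n := by
  obtain ⟨m, rfl⟩ : ∃ m, n = m + 3 := ⟨n - 3, by omega⟩
  set G : ℕ → Equiv.Perm (EuclideanSpace ℝ (Fin (m + 3))) :=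
    fun j => ((List.range j).map fun k => sC (m + 3) (k + 1)).prod with hGdef
  have hG : ∀ j, G (j + 1) = G j * sC (m + 3) (j + 1) := by
    intro j
    simp [hGdef, List.range_succ]
  have hG1 : G 1 = sC (m + 3) 1 := by
    simp [hGdef, List.range_succ]
  have main : ∀ j, 1 ≤ j → j ≤ m + 1 →
      G j (E (m + 3) (j + 1) + E (m + 3) (m + 3)) = E (m + 3) 1 + E (m + 3) (m + 3) := by
    intro j hj1
    induction j, hj1 using Nat.le_induction with
    | base =>
      intro _
      rw [hG1]
      exact sC_step 1 le_rfl (by omega)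
    | succ j hj ih =>
      intro hj2
      rw [hG j, Equiv.Perm.mul_apply, sC_step (j + 1) (by omega) (by omega)]
      exact ih (by omega)
  have hα : alphaC (m + 3) (m + 3 - 1) = E (m + 3) (m + 2) - E (m + 3) (m + 3) := by
    have h1 : m + 3 - 1 = m + 2 := rfl
    rw [alphaC, if_neg (by omega), h1]
  rw [hα]
  have step1 : vC (m + 3) (E (m + 3) (m + 2) - E (m + 3) (m + 3))
      = G (m + 2) (sC (m + 3) (m + 3) (E (m + 3) (m + 2) - E (m + 3) (m + 3))) := by
    show G (m + 2 + 1) _ = _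
    rw [hG (m + 2)]
    rfl
  rw [step1, sC_long (m + 2) (by omega) (by omega)]
  have step2 : G (m + 2) (E (m + 3) (m + 2) + E (m + 3) (m + 3))
      = G (m + 1) (sC (m + 3) (m + 2) (E (m + 3) (m + 2) + E (m + 3) (m + 3))) := by
    show G (m + 1 + 1) _ = _
    rw [hG (m + 1)]
    rfl
  rw [step2]
  have step3 : sC (m + 3) (m + 2) (E (m + 3) (m + 2) + E (m + 3) (m + 3))
      = E (m + 3) (m + 2) + E (m + 3) (m + 3) := sC_fix (m + 2) (by omega) (by omega)
  rw [step3]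
  exact main (m + 1) (by omega) le_rfl

end addenda3

section addenda4
open Finset

variable {n : ℕ}

private lemma ne_one_of_neg {u : Equiv.Perm (EuclideanSpace ℝ (Fin n))}
    (hgood : GoodP u) (hfix : u (E n 1) = E n 1) (hn : 3 ≤ n)
    {j a : ℕ} (hj2 : 2 ≤ j) (hjn : j ≤ n) (ha1 : 1 ≤ a) (han : a ≤ n)
    (heq : u (E n j) = -E n a) : 2 ≤ a := by
  by_contra h
  have ha : a = 1 := by omega
  subst ha
  have h0 : ⟪u (E n j), u (E n 1)⟫_ℝ = 0 := by
    rw [hgood.2.2, E_inner n j 1 (by omega) hjn (by omega) (by omega), if_neg (by omega)]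
  rw [heq, hfix, inner_neg_left,
    E_inner n 1 1 (by omega) (by omega) (by omega) (by omega), if_pos rfl] at h0
  norm_num at h0

private lemma long_step (hn : 3 ≤ n) {u : Equiv.Perm (EuclideanSpace ℝ (Fin n))}
    (hgood : GoodP u) (hfix : u (E n 1) = E n 1)
    (hnegn : IsNegC n (u (alphaC n n))) : ∃ k, 2 ≤ k ∧ k ≤ n ∧ u (E n n) = -E n k := by
  have hα : alphaC n n = (2 : ℝ) • E n n := by rw [alphaC, if_pos rfl]
  have hu2 : u (alphaC n n) = (2 : ℝ) • u (E n n) := by rw [hα, hgood.2.1]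
  have hnorm : ⟪u (alphaC n n), u (alphaC n n)⟫_ℝ = 4 := by
    rw [hgood.2.2, hα, real_inner_smul_left, real_inner_smul_right,
      E_inner n n n (by omega) le_rfl (by omega) le_rfl, if_pos rfl]
    norm_num
  rcases isNeg_cases _ hnegn with ⟨a, b, ha, hab, hb, hc⟩ | ⟨a, ha, hb, hc⟩
  · exfalso
    have hb1 : 1 ≤ b := ha.trans hab.le
    have ha2 : a ≤ n := hab.le.trans hb
    rcases hc with hc | hc <;> rw [hc] at hnorm <;>
      simp only [inner_neg_left, inner_neg_right, inner_add_left, inner_add_right,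
        inner_sub_left, inner_sub_right, neg_neg, E_inner n, ha, ha2, hb1, hb,
        eq_self_iff_true, if_true] at hnorm <;>
      split_ifs at hnorm <;> first | omega | norm_num at hnorm
  · have hEn : u (E n n) = -E n a := by
      rw [hu2] at hc
      have h2 : (2 : ℝ) • u (E n n) = (2 : ℝ) • (-E n a) := by rw [hc, smul_neg]
      exact smul_right_injective (EuclideanSpace ℝ (Fin n)) (two_ne_zero (α := ℝ)) h2
    exact ⟨a, ne_one_of_neg hgood hfix hn (by omega) le_rfl ha hb hEn, hb, hEn⟩

private lemma u_fix_n (hn : 3 ≤ n) {u : Equiv.Perm (EuclideanSpace ℝ (Fin n))}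
    (hgood : GoodP u) (hfix : u (E n 1) = E n 1)
    (hneg : ∀ j, 2 ≤ j → j ≤ n → IsNegC n (u (alphaC n j))) : u (E n n) = -E n n := by
  have key : ∀ d, d ≤ n - 2 → ∃ k, 2 ≤ k ∧ k ≤ n - d ∧ u (E n (n - d)) = -E n k := by
    intro d
    induction d with
    | zero =>
      intro _
      simpa using long_step hn hgood hfix (hneg n (by omega) le_rfl)
    | succ d ih =>
      intro hd
      obtain ⟨k, hk2, hkd, hkeq⟩ := ih (by omega)
      set j := n - (d + 1) with hjdef
      have hj2 : 2 ≤ j := by omega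
      have hjn : j ≤ n := by omega
      have hj1 : 1 ≤ j := by omega
      have hj11 : 1 ≤ j + 1 := by omega
      have hj1n : j + 1 ≤ n := by omega
      have hjj : j + 1 = n - d := by omega
      have hk1 : 1 ≤ k := by omega
      have hkn : k ≤ n := by omega
      have hEj1 : u (E n (j + 1)) = -E n k := by rw [hjj]; exact hkeq
      have hαj : alphaC n j = E n j - E n (j + 1) := by rw [alphaC, if_neg (by omega)]
      have huα : u (alphaC n j) = u (E n j) - u (E n (j + 1)) := by
        rw [hαj, hgood.sub]
      have hnorm1 : (1 : ℝ) = ⟪u (E n j), u (E n j)⟫_ℝ := by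
        rw [hgood.2.2, E_inner n j j hj1 hjn hj1 hjn, if_pos rfl]
      have hnorm2 : ⟪u (alphaC n j), u (alphaC n j)⟫_ℝ = 2 := by
        rw [hgood.2.2, hαj]
        simp only [inner_sub_left, inner_sub_right, E_inner n, hj1, hjn, hj11, hj1n,
          eq_self_iff_true, if_true]
        rw [if_neg (show ¬j = j + 1 by omega), if_neg (show ¬j + 1 = j by omega)]
        norm_num
      rcases isNeg_cases _ (hneg j hj2 hjn) with ⟨a, b, ha1, hab, hbn, hc⟩ | ⟨a, ha, hb, hc⟩
      · have ha2 : a ≤ n := by omega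
        have hb1 : 1 ≤ b := by omega
        have h0 : u (E n j) - u (E n (j + 1)) = u (alphaC n j) := huα.symm
        rcases hc with hc | hc
        · exfalso
          have hueq : u (E n j) = -(E n a + E n b) - E n k := by
            have h1 := eq_add_of_sub_eq (h0.trans hc)
            rw [hEj1] at h1
            rw [h1]
            abel
          rw [hueq] at hnorm1
          simp only [inner_sub_left, inner_sub_right, inner_add_left, inner_add_right,
            inner_neg_left, inner_neg_right, neg_neg, E_inner n, ha1, ha2, hb1, hbn,
            hk1, hkn, eq_self_iff_true, if_true] at hnorm1
          split_ifs at hnorm1 <;> first | omega | norm_num at hnorm1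
        · have hueq : u (E n j) = E n b - E n a - E n k := by
            have h1 := eq_add_of_sub_eq (h0.trans hc)
            rw [hEj1] at h1
            rw [h1]
            abel
          rw [hueq] at hnorm1
          simp only [inner_sub_left, inner_sub_right, E_inner n, ha1, ha2, hb1, hbn,
            hk1, hkn, eq_self_iff_true, if_true] at hnorm1
          rw [if_neg (show ¬a = b by omega), if_neg (show ¬b = a by omega)] at hnorm1
          have hbk : b = k := by
            by_contra hbk
            split_ifs at hnorm1 <;> first | omega | norm_num at hnorm1
          have hfin : u (E n j) = -E n a := by
            rw [hueq, hbk]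
            abel
          refine ⟨a, ne_one_of_neg hgood hfix hn hj2 hjn ha1 ha2 hfin, by omega, hfin⟩
      · exfalso
        rw [hc] at hnorm2
        simp only [inner_neg_left, inner_neg_right, neg_neg, real_inner_smul_left,
          real_inner_smul_right] at hnorm2
        rw [E_inner n a a ha hb ha hb, if_pos rfl] at hnorm2
        norm_num at hnorm2
  have asc : ∀ j, 2 ≤ j → j ≤ n → u (E n j) = -E n j := by
    intro j
    induction j using Nat.strong_induction_on with
    | _ j ih =>
      intro hj2 hjn
      obtain ⟨k, hk2, hkj, hkeq⟩ := key (n - j) (by omega)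
      rw [show n - (n - j) = j by omega] at hkeq hkj
      rcases eq_or_lt_of_le hkj with heq | hlt
      · rw [hkeq, heq]
      · exfalso
        have hIH := ih k hlt hk2 (by omega)
        have hEE : E n j = E n k := u.injective (by rw [hkeq, hIH])
        have h1 : (1 : ℝ) = 0 := by
          calc (1 : ℝ) = ⟪E n j, E n j⟫_ℝ := by
                rw [E_inner n j j (by omega) hjn (by omega) hjn, if_pos rfl]
          _ = ⟪E n j, E n k⟫_ℝ := by rw [← hEE]
          _ = 0 := by rw [E_inner n j k (by omega) hjn (by omega) (by omega), if_neg (by omega)]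
        norm_num at h1
  exact asc n (by omega) le_rfl

end addenda4

section addenda5
open Finset

variable {n : ℕ}

private lemma tele (p q : ℕ) (hq : p ≤ q) :
    ∑ j ∈ Finset.Ico p q, (E n j - E n (j + 1)) = E n p - E n q := by
  induction q, hq using Nat.le_induction with
  | base => simp
  | succ q hpq ih =>
    rw [Finset.sum_Ico_succ_top hpq, ih]
    abel

private lemma comb (hn : 3 ≤ n) (k : ℕ) (hk2 : 2 ≤ k) (hkn : k ≤ n) :
    ∃ c : ℕ → ℕ, E n 1 + E n k = ∑ j ∈ Finset.Icc 1 n, (c j : ℝ) • alphaC n j := by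
  refine ⟨fun j => if j < k then 1 else if j ≤ n - 1 then 2 else 1, ?_⟩
  show E n 1 + E n k = ∑ j ∈ Finset.Icc 1 n,
    (((if j < k then 1 else if j ≤ n - 1 then 2 else 1 : ℕ) : ℝ)) • alphaC n j
  rw [← Finset.Ico_add_one_right_eq_Icc, Finset.sum_Ico_succ_top (by omega : 1 ≤ n)]
  rw [← Finset.sum_Ico_consecutive _ (by omega : 1 ≤ k) (by omega : k ≤ n)]
  have s1 : ∑ j ∈ Finset.Ico 1 k,
      (((if j < k then 1 else if j ≤ n - 1 then 2 else 1 : ℕ) : ℝ)) • alphaC n j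
      = E n 1 - E n k := by
    have hterm : ∀ j ∈ Finset.Ico 1 k,
        (((if j < k then 1 else if j ≤ n - 1 then 2 else 1 : ℕ) : ℝ)) • alphaC n j
        = E n j - E n (j + 1) := by
      intro j hj
      rw [Finset.mem_Ico] at hj
      rw [if_pos hj.2, alphaC, if_neg (by omega), Nat.cast_one, one_smul]
    rw [Finset.sum_congr rfl hterm, tele 1 k (by omega)]
  have s2 : ∑ j ∈ Finset.Ico k n,
      (((if j < k then 1 else if j ≤ n - 1 then 2 else 1 : ℕ) : ℝ)) • alphaC n j
      = (2 : ℝ) • (E n k - E n n) := by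
    have hterm : ∀ j ∈ Finset.Ico k n,
        (((if j < k then 1 else if j ≤ n - 1 then 2 else 1 : ℕ) : ℝ)) • alphaC n j
        = (2 : ℝ) • (E n j - E n (j + 1)) := by
      intro j hj
      rw [Finset.mem_Ico] at hj
      rw [if_neg (by omega), if_pos (by omega), alphaC, if_neg (by omega)]
      norm_num
    rw [Finset.sum_congr rfl hterm, ← Finset.smul_sum, tele k n (by omega)]
  rw [s1, s2, if_neg (by omega), if_neg (by omega), alphaC, if_pos rfl, Nat.cast_one, one_smul]
  module

end addenda5

section addenda6
open Finset

variable {n : ℕ}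

private lemma orth1 {j : ℕ} (hn : 3 ≤ n) (hj2 : 2 ≤ j) (hjn : j ≤ n) :
    ⟪E n 1, alphaC n j⟫_ℝ = 0 := by
  by_cases h : j = n
  · rw [h, alphaC, if_pos rfl, real_inner_smul_right,
      E_inner n 1 n (by omega) (by omega) (by omega) le_rfl, if_neg (by omega)]
    ring
  · rw [alphaC, if_neg h, inner_sub_right,
      E_inner n 1 j (by omega) (by omega) (by omega) hjn, if_neg (by omega),
      E_inner n 1 (j + 1) (by omega) (by omega) (by omega) (by omega), if_neg (by omega)]
    ring

end addenda6

/-- Type `Cₙ` (`n ≥ 3`), `1 ≤ i ≤ n - 1`: let `v = s₁ ∘ ⋯ ∘ sₙ`, let `u` be the longest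
element of the parabolic Weyl group generated by `{sⱼ : j ≠ 1}` and let `u'` be the longest
element of the parabolic Weyl group generated by `{sⱼ : j ∉ {1, i}}`.  Then
`wᵢ = u' ∘ u ∘ v` sends `αₙ₋₁` to a positive root which is not simple. -/
theorem stmt_13 (n : ℕ) (hn : 3 ≤ n) (i : ℕ) (hi1 : 1 ≤ i) (hi2 : i ≤ n - 1)
    (u : Equiv.Perm (EuclideanSpace ℝ (Fin n)))
    (hu : u ∈ Subgroup.closure {g | ∃ j, 1 ≤ j ∧ j ≤ n ∧ j ≠ 1 ∧ g = sC n j})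
    (hneg : ∀ j, 1 ≤ j → j ≤ n → j ≠ 1 → IsNegC n (u (alphaC n j)))
    (u' : Equiv.Perm (EuclideanSpace ℝ (Fin n)))
    (hu' : u' ∈ Subgroup.closure {g | ∃ j, 1 ≤ j ∧ j ≤ n ∧ j ≠ 1 ∧ j ≠ i ∧ g = sC n j})
    (hneg' : ∀ j, 1 ≤ j → j ≤ n → j ≠ 1 → j ≠ i → IsNegC n (u' (alphaC n j))) :
    IsPosC n ((u' * u * vC n) (alphaC n (n - 1))) ∧
    ∀ j, 1 ≤ j → j ≤ n → (u' * u * vC n) (alphaC n (n - 1)) ≠ alphaC n j := by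
  have hgood : GoodP u :=
    closure_good (fun g hg => by obtain ⟨j, -, -, -, rfl⟩ := hg; exact ⟨alphaC n j, rfl⟩) hu
  have hfix : u (E n 1) = E n 1 :=
    closure_fix (fun g hg => by
      obtain ⟨j, hj1, hjn, hj1', rfl⟩ := hg
      exact ⟨alphaC n j, orth1 hn (by omega) hjn, rfl⟩) hu
  have hgood' : GoodP u' :=
    closure_good (fun g hg => by obtain ⟨j, -, -, -, -, rfl⟩ := hg; exact ⟨alphaC n j, rfl⟩) hu'
  have hfix' : u' (E n 1) = E n 1 :=
    closure_fix (fun g hg => by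
      obtain ⟨j, hj1, hjn, hj1', -, rfl⟩ := hg
      exact ⟨alphaC n j, orth1 hn (by omega) hjn, rfl⟩) hu'
  have hun : u (E n n) = -E n n :=
    u_fix_n hn hgood hfix (fun j hj2 hjn => hneg j (by omega) hjn (by omega))
  obtain ⟨k, hk2, hkn, hu'n⟩ :=
    long_step hn hgood' hfix' (hneg' n (by omega) le_rfl (by omega) (by omega))
  have hv := vC_apply hn
  have hw : (u' * u * vC n) (alphaC n (n - 1)) = E n 1 + E n k := by
    rw [Equiv.Perm.mul_apply, Equiv.Perm.mul_apply, hv, hgood.1, hfix, hun,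
      ← sub_eq_add_neg, hgood'.sub, hfix', hu'n, sub_neg_eq_add]
  rw [hw]
  constructor
  · exact ⟨Or.inl ⟨1, k, le_rfl, by omega, hkn, Or.inl rfl⟩, comb hn k hk2 hkn⟩
  · intro j hj1 hjn heq
    by_cases hjn' : j = n
    · rw [hjn', alphaC, if_pos rfl] at heq
      have h2 := congrArg (fun z => ⟪E n 1, z⟫_ℝ) heq
      simp only [inner_add_right, real_inner_smul_right] at h2
      rw [E_inner n 1 1 (by omega) (by omega) (by omega) (by omega), if_pos rfl,
        E_inner n 1 k (by omega) (by omega) (by omega) hkn, if_neg (by omega),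
        E_inner n 1 n (by omega) (by omega) (by omega) le_rfl, if_neg (by omega)] at h2
      norm_num at h2
    · rw [alphaC, if_neg hjn'] at heq
      by_cases hj1' : j = 1
      · subst hj1'
        have h2 := congrArg (fun z => ⟪E n 2, z⟫_ℝ) heq
        simp only [inner_add_right, inner_sub_right] at h2
        rw [E_inner n 2 1 (by omega) (by omega) (by omega) (by omega), if_neg (by omega),
          E_inner n 2 k (by omega) (by omega) (by omega) hkn,
          E_inner n 2 2 (by omega) (by omega) (by omega) (by omega), if_pos rfl] at h2
        split_ifs at h2 <;> norm_num at h2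
      · have h2 := congrArg (fun z => ⟪E n 1, z⟫_ℝ) heq
        simp only [inner_add_right, inner_sub_right] at h2
        rw [E_inner n 1 1 (by omega) (by omega) (by omega) (by omega), if_pos rfl,
          E_inner n 1 k (by omega) (by omega) (by omega) hkn, if_neg (by omega),
          E_inner n 1 j (by omega) (by omega) (by omega) hjn, if_neg (by omega),
          E_inner n 1 (j + 1) (by omega) (by omega) (by omega) (by omega),
          if_neg (by omega)] at h2
        norm_num at h2
end

section
/- Let v = s_1 ∘ s_2 ∘ s_3 ∘ s_2 ∘ s_4 ∘ s_3 ∘ s_1 ∘ s_2 (rightmost factor applied first), and let u be an element of the subgroup of the orthogonal group of ℝ^4 generated by {s_2, s_3, s_4} such that u(α_2), u(α_3), u(α_4) are all negative roots. Then v(α_3) = α_1 + 2α_2 + 2α_3 + α_4 and u(v(α_3)) = α_1 + α_2 + 2α_3 + α_4. -/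
open scoped InnerProductSpace

/-- The simple roots of type `F₄`: `α₁ = e₂ - e₃`, `α₂ = e₃ - e₄`, `α₃ = e₄`,
`α₄ = (e₁ - e₂ - e₃ - e₄)/2`. -/
noncomputable def alphaF : ℕ → EuclideanSpace ℝ (Fin 4)
  | 1 => E 4 2 - E 4 3
  | 2 => E 4 3 - E 4 4
  | 3 => E 4 4
  | 4 => (1 / 2 : ℝ) • (E 4 1 - E 4 2 - E 4 3 - E 4 4)
  | _ => 0

/-- The roots of type `F₄`: `±eᵢ`, `±eᵢ ± eⱼ` (`i < j`) and `(±e₁ ± e₂ ± e₃ ± e₄)/2`. -/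
def RootF : Set (EuclideanSpace ℝ (Fin 4)) :=
  {x | (∃ i, 1 ≤ i ∧ i ≤ 4 ∧ (x = E 4 i ∨ x = -E 4 i)) ∨
    (∃ i j, 1 ≤ i ∧ i < j ∧ j ≤ 4 ∧
      (x = E 4 i + E 4 j ∨ x = -(E 4 i + E 4 j) ∨ x = E 4 i - E 4 j ∨ x = E 4 j - E 4 i)) ∨
    (∃ ε : ℕ → ℝ, (∀ i, ε i = 1 ∨ ε i = -1) ∧
      x = (1 / 2 : ℝ) • (ε 1 • E 4 1 + ε 2 • E 4 2 + ε 3 • E 4 3 + ε 4 • E 4 4))}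

/-- A positive root of type `F₄`: a root which is a nonnegative integer combination of
the simple roots. -/
def IsPosF (x : EuclideanSpace ℝ (Fin 4)) : Prop :=
  x ∈ RootF ∧ ∃ c : ℕ → ℕ, x = ∑ i ∈ Finset.Icc 1 4, (c i : ℝ) • alphaF i

/-- A negative root of type `F₄`: the negative of a positive root. -/
def IsNegF (x : EuclideanSpace ℝ (Fin 4)) : Prop :=
  IsPosF (-x)

/-- The simple reflections `sᵢ = s_{αᵢ}` of type `F₄`. -/
noncomputable def sF (i : ℕ) : Equiv.Perm (EuclideanSpace ℝ (Fin 4)) :=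
  sRefl (alphaF i)

/-- The highest root `α₀ = e₁ + e₂ = 2α₁ + 3α₂ + 4α₃ + 2α₄` of type `F₄`. -/
noncomputable def alpha0F : EuclideanSpace ℝ (Fin 4) :=
  E 4 1 + E 4 2

/-- `v = s₁ ∘ s₂ ∘ s₃ ∘ s₂ ∘ s₄ ∘ s₃ ∘ s₁ ∘ s₂` (rightmost factor applied first);
recall that in `Equiv.Perm` the product `f * g` is the composition `f ∘ g`. -/
noncomputable def vF : Equiv.Perm (EuclideanSpace ℝ (Fin 4)) :=
  sF 1 * sF 2 * sF 3 * sF 2 * sF 4 * sF 3 * sF 1 * sF 2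

set_option maxHeartbeats 1000000

attribute [-simp] inner_self_eq_norm_sq_to_K

private lemma sF_apply (i : ℕ) (x : EuclideanSpace ℝ (Fin 4)) :
    sF i x = x - (2 * ⟪x, alphaF i⟫_ℝ / ⟪alphaF i, alphaF i⟫_ℝ) • alphaF i := rfl

private lemma vstep1 : sF 2 (alphaF 3) = E 4 3 := by
  ext k
  fin_cases k <;>
    simp [sF_apply, E, alphaF, EuclideanSpace.single_apply, PiLp.inner_apply,
      Fin.sum_univ_four] <;> norm_num

private lemma vstep2 : sF 1 (E 4 3) = E 4 2 := by
  ext k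
  fin_cases k <;>
    simp [sF_apply, E, alphaF, EuclideanSpace.single_apply, PiLp.inner_apply,
      Fin.sum_univ_four] <;> norm_num

private lemma vstep3 : sF 3 (E 4 2) = E 4 2 := by
  ext k
  fin_cases k <;>
    simp [sF_apply, E, alphaF, EuclideanSpace.single_apply, PiLp.inner_apply,
      Fin.sum_univ_four] <;> norm_num

private lemma vstep4 :
    sF 4 (E 4 2) = (1/2 : ℝ) • (E 4 1 + E 4 2 - E 4 3 - E 4 4) := by
  ext k
  fin_cases k <;>
    simp [sF_apply, E, alphaF, EuclideanSpace.single_apply, PiLp.inner_apply,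
      Fin.sum_univ_four] <;> norm_num

private lemma vstep5 :
    sF 2 ((1/2 : ℝ) • (E 4 1 + E 4 2 - E 4 3 - E 4 4)) =
      (1/2 : ℝ) • (E 4 1 + E 4 2 - E 4 3 - E 4 4) := by
  ext k
  fin_cases k <;>
    simp [sF_apply, E, alphaF, EuclideanSpace.single_apply, PiLp.inner_apply,
      Fin.sum_univ_four] <;> norm_num

private lemma vstep6 :
    sF 3 ((1/2 : ℝ) • (E 4 1 + E 4 2 - E 4 3 - E 4 4)) =
      (1/2 : ℝ) • (E 4 1 + E 4 2 - E 4 3 + E 4 4) := by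
  ext k
  fin_cases k <;>
    simp [sF_apply, E, alphaF, EuclideanSpace.single_apply, PiLp.inner_apply,
      Fin.sum_univ_four] <;> norm_num

private lemma vstep7 :
    sF 2 ((1/2 : ℝ) • (E 4 1 + E 4 2 - E 4 3 + E 4 4)) =
      (1/2 : ℝ) • (E 4 1 + E 4 2 + E 4 3 - E 4 4) := by
  ext k
  fin_cases k <;>
    simp [sF_apply, E, alphaF, EuclideanSpace.single_apply, PiLp.inner_apply,
      Fin.sum_univ_four] <;> norm_num

private lemma vstep8 :
    sF 1 ((1/2 : ℝ) • (E 4 1 + E 4 2 + E 4 3 - E 4 4)) =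
      (1/2 : ℝ) • (E 4 1 + E 4 2 + E 4 3 - E 4 4) := by
  ext k
  fin_cases k <;>
    simp [sF_apply, E, alphaF, EuclideanSpace.single_apply, PiLp.inner_apply,
      Fin.sum_univ_four] <;> norm_num

private lemma vF_alpha3 : vF (alphaF 3) = (1/2 : ℝ) • (E 4 1 + E 4 2 + E 4 3 - E 4 4) := by
  show (sF 1 * sF 2 * sF 3 * sF 2 * sF 4 * sF 3 * sF 1 * sF 2) (alphaF 3) = _
  simp only [Equiv.Perm.mul_apply]
  rw [vstep1, vstep2, vstep3, vstep4, vstep5, vstep6, vstep7, vstep8]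

private lemma vF_alpha3' :
    vF (alphaF 3) = alphaF 1 + (2 : ℝ) • alphaF 2 + (2 : ℝ) • alphaF 3 + alphaF 4 := by
  rw [vF_alpha3]
  ext k
  fin_cases k <;>
    simp [E, alphaF, EuclideanSpace.single_apply] <;> norm_num
private lemma sRefl_add {V : Type*} [NormedAddCommGroup V] [InnerProductSpace ℝ V]
    (b x y : V) : sRefl b (x + y) = sRefl b x + sRefl b y := by
  simp only [sRefl, Equiv.coe_fn_mk, inner_add_left]
  have : 2 * (⟪x, b⟫_ℝ + ⟪y, b⟫_ℝ) / ⟪b, b⟫_ℝ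
      = 2 * ⟪x, b⟫_ℝ / ⟪b, b⟫_ℝ + 2 * ⟪y, b⟫_ℝ / ⟪b, b⟫_ℝ := by ring
  rw [this, add_smul]
  abel

private lemma sRefl_smul {V : Type*} [NormedAddCommGroup V] [InnerProductSpace ℝ V]
    (b : V) (c : ℝ) (x : V) : sRefl b (c • x) = c • sRefl b x := by
  simp only [sRefl, Equiv.coe_fn_mk, real_inner_smul_left, smul_sub, smul_smul]
  congr 1
  ring

private lemma sRefl_inner {V : Type*} [NormedAddCommGroup V] [InnerProductSpace ℝ V]
    (b x y : V) : ⟪sRefl b x, sRefl b y⟫_ℝ = ⟪x, y⟫_ℝ := by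
  by_cases hb : b = 0
  · simp [sRefl, hb]
  · have h : ⟪b, b⟫_ℝ ≠ 0 := fun h => hb (inner_self_eq_zero.mp h)
    simp only [sRefl, Equiv.coe_fn_mk, inner_sub_left, inner_sub_right,
      real_inner_smul_left, real_inner_smul_right]
    rw [real_inner_comm b x, real_inner_comm b y]
    field_simp
    ring

/-- The properties of elements of the parabolic subgroup that we need. -/
private def GoodF (u : Equiv.Perm (EuclideanSpace ℝ (Fin 4))) : Prop :=
  (∀ x y, u (x + y) = u x + u y) ∧ (∀ (c : ℝ) x, u (c • x) = c • u x) ∧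
  (∀ x y, ⟪u x, u y⟫_ℝ = ⟪x, y⟫_ℝ) ∧ u (E 4 1 + E 4 2) = E 4 1 + E 4 2

private lemma perm_apply_inv_self {α : Type*} (f : Equiv.Perm α) (x : α) : f (f⁻¹ x) = x :=
  f.apply_symm_apply x

private lemma goodF_of_mem {u : Equiv.Perm (EuclideanSpace ℝ (Fin 4))}
    (hu : u ∈ Subgroup.closure {g | ∃ j, 2 ≤ j ∧ j ≤ 4 ∧ g = sF j}) : GoodF u := by
  induction hu using Subgroup.closure_induction with
  | mem g hg =>
    obtain ⟨j, hj2, hj4, rfl⟩ := hg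
    refine ⟨fun x y => sRefl_add _ x y, fun c x => sRefl_smul _ c x,
      fun x y => sRefl_inner _ x y, ?_⟩
    have hz : ⟪E 4 1 + E 4 2, alphaF j⟫_ℝ = 0 := by
      interval_cases j <;>
        simp [E, alphaF, EuclideanSpace.single_apply, PiLp.inner_apply,
          Fin.sum_univ_four] <;> norm_num
    rw [sF_apply, hz]
    simp
  | one => exact ⟨fun x y => rfl, fun c x => rfl, fun x y => rfl, rfl⟩
  | mul g h _ _ hg hh =>
    obtain ⟨ga, gs, gi, ge⟩ := hg
    obtain ⟨ha, hs, hi, he⟩ := hh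
    exact ⟨fun x y => by simp [Equiv.Perm.mul_apply, ha, ga],
      fun c x => by simp [Equiv.Perm.mul_apply, hs, gs],
      fun x y => by simp [Equiv.Perm.mul_apply, gi, hi],
      by simp [Equiv.Perm.mul_apply, he, ge]⟩
  | inv g _ hg =>
    obtain ⟨ga, gs, gi, ge⟩ := hg
    refine ⟨fun x y => g.injective ?_, fun c x => g.injective ?_, fun x y => ?_,
      g.injective ?_⟩
    · rw [ga, perm_apply_inv_self, perm_apply_inv_self,
        perm_apply_inv_self]
    · rw [gs, perm_apply_inv_self, perm_apply_inv_self]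
    · rw [← gi (g⁻¹ x) (g⁻¹ y), perm_apply_inv_self, perm_apply_inv_self]
    · rw [perm_apply_inv_self, ge]
private lemma isPosF_coords {y : EuclideanSpace ℝ (Fin 4)} (h : IsPosF y) :
    0 ≤ y 0 ∧ 0 ≤ y 0 + y 1 ∧ 0 ≤ 2 * y 0 + y 1 + y 2 ∧ 0 ≤ 3 * y 0 + y 1 + y 2 + y 3 := by
  obtain ⟨-, c, hc⟩ := h
  have hIcc : (Finset.Icc 1 4 : Finset ℕ) = {1, 2, 3, 4} := by decide
  rw [hIcc] at hc
  have hsum : ∀ k : Fin 4, y k = (c 1 : ℝ) * alphaF 1 k + (c 2 : ℝ) * alphaF 2 k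
      + (c 3 : ℝ) * alphaF 3 k + (c 4 : ℝ) * alphaF 4 k := by
    intro k
    have := congrArg (fun v => v k) hc
    simpa [Finset.sum_insert, add_assoc] using this
  have h1 := hsum 0; have h2 := hsum 1; have h3 := hsum 2; have h4 := hsum 3
  simp +decide [E, alphaF, EuclideanSpace.single_apply, Fin.ext_iff] at h1 h2 h3 h4
  have n1 : (0:ℝ) ≤ c 1 := Nat.cast_nonneg _
  have n2 : (0:ℝ) ≤ c 2 := Nat.cast_nonneg _
  have n3 : (0:ℝ) ≤ c 3 := Nat.cast_nonneg _
  have n4 : (0:ℝ) ≤ c 4 := Nat.cast_nonneg _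
  refine ⟨?_, ?_, ?_, ?_⟩ <;> linarith
private lemma long_class {y : EuclideanSpace ℝ (Fin 4)} (hp : IsPosF y)
    (hn : ⟪y, y⟫_ℝ = 2) (he : ⟪y, E 4 1 + E 4 2⟫_ℝ = 0) :
    y = E 4 1 - E 4 2 ∨ y = E 4 3 + E 4 4 ∨ y = E 4 3 - E 4 4 := by
  obtain ⟨c0, c1, c2, c3⟩ := isPosF_coords hp
  obtain ⟨⟨i, hi1, hi4, rfl | rfl⟩ | ⟨i, j, hi1, hij, hj4, rfl | rfl | rfl | rfl⟩ |
    ⟨ε, hε, rfl⟩, -⟩ := hp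
  · interval_cases i <;>
      norm_num +decide [E, EuclideanSpace.single_apply, PiLp.inner_apply,
        Fin.sum_univ_four] at hn
  · interval_cases i <;>
      norm_num +decide [E, EuclideanSpace.single_apply, PiLp.inner_apply,
        Fin.sum_univ_four] at hn
  · interval_cases j <;> interval_cases i <;>
      first
        | exact Or.inl rfl
        | exact Or.inr (Or.inl rfl)
        | exact Or.inr (Or.inr rfl)
        | (norm_num +decide [E, EuclideanSpace.single_apply, PiLp.inner_apply,
            Fin.sum_univ_four] at he; done)
        | (norm_num +decide [E, EuclideanSpace.single_apply] at c0; done)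
        | (norm_num +decide [E, EuclideanSpace.single_apply] at c2; done)
        | (norm_num +decide [E, EuclideanSpace.single_apply] at c3; done)
  · interval_cases j <;> interval_cases i <;>
      first
        | exact Or.inl rfl
        | exact Or.inr (Or.inl rfl)
        | exact Or.inr (Or.inr rfl)
        | (norm_num +decide [E, EuclideanSpace.single_apply, PiLp.inner_apply,
            Fin.sum_univ_four] at he; done)
        | (norm_num +decide [E, EuclideanSpace.single_apply] at c0; done)
        | (norm_num +decide [E, EuclideanSpace.single_apply] at c2; done)
        | (norm_num +decide [E, EuclideanSpace.single_apply] at c3; done)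
  · interval_cases j <;> interval_cases i <;>
      first
        | exact Or.inl rfl
        | exact Or.inr (Or.inl rfl)
        | exact Or.inr (Or.inr rfl)
        | (norm_num +decide [E, EuclideanSpace.single_apply, PiLp.inner_apply,
            Fin.sum_univ_four] at he; done)
        | (norm_num +decide [E, EuclideanSpace.single_apply] at c0; done)
        | (norm_num +decide [E, EuclideanSpace.single_apply] at c2; done)
        | (norm_num +decide [E, EuclideanSpace.single_apply] at c3; done)
  · interval_cases j <;> interval_cases i <;>
      first
        | exact Or.inl rfl
        | exact Or.inr (Or.inl rfl)
        | exact Or.inr (Or.inr rfl)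
        | (norm_num +decide [E, EuclideanSpace.single_apply, PiLp.inner_apply,
            Fin.sum_univ_four] at he; done)
        | (norm_num +decide [E, EuclideanSpace.single_apply] at c0; done)
        | (norm_num +decide [E, EuclideanSpace.single_apply] at c2; done)
        | (norm_num +decide [E, EuclideanSpace.single_apply] at c3; done)
  · rcases hε 1 with h1 | h1 <;> rcases hε 2 with h2 | h2 <;>
      rcases hε 3 with h3 | h3 <;> rcases hε 4 with h4 | h4 <;>
      rw [h1, h2, h3, h4] at hn <;>
      norm_num +decide [E, EuclideanSpace.single_apply, PiLp.inner_apply,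
        Fin.sum_univ_four] at hn
private lemma short_class {y : EuclideanSpace ℝ (Fin 4)} (hp : IsPosF y)
    (hn : ⟪y, y⟫_ℝ = 1) (he : ⟪y, E 4 1 + E 4 2⟫_ℝ = 0) :
    y = E 4 3 ∨ y = E 4 4 ∨ ∃ a b : ℝ, (a = 1 ∨ a = -1) ∧ (b = 1 ∨ b = -1) ∧
      y = (1/2 : ℝ) • (E 4 1 - E 4 2 + a • E 4 3 + b • E 4 4) := by
  obtain ⟨c0, c1, c2, c3⟩ := isPosF_coords hp
  obtain ⟨⟨i, hi1, hi4, rfl | rfl⟩ | ⟨i, j, hi1, hij, hj4, rfl | rfl | rfl | rfl⟩ |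
    ⟨ε, hε, rfl⟩, -⟩ := hp
  · interval_cases i <;>
      first
        | exact Or.inl rfl
        | exact Or.inr (Or.inl rfl)
        | (norm_num +decide [E, EuclideanSpace.single_apply, PiLp.inner_apply,
            Fin.sum_univ_four] at he; done)
  · interval_cases i <;>
      first
        | (norm_num +decide [E, EuclideanSpace.single_apply, PiLp.inner_apply,
            Fin.sum_univ_four] at he; done)
        | (norm_num +decide [E, EuclideanSpace.single_apply] at c2; done)
        | (norm_num +decide [E, EuclideanSpace.single_apply] at c3; done)
  · interval_cases j <;> interval_cases i <;>
      norm_num +decide [E, EuclideanSpace.single_apply, PiLp.inner_apply,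
        Fin.sum_univ_four] at hn
  · interval_cases j <;> interval_cases i <;>
      norm_num +decide [E, EuclideanSpace.single_apply, PiLp.inner_apply,
        Fin.sum_univ_four] at hn
  · interval_cases j <;> interval_cases i <;>
      norm_num +decide [E, EuclideanSpace.single_apply, PiLp.inner_apply,
        Fin.sum_univ_four] at hn
  · interval_cases j <;> interval_cases i <;>
      norm_num +decide [E, EuclideanSpace.single_apply, PiLp.inner_apply,
        Fin.sum_univ_four] at hn
  · rcases hε 1 with h1 | h1 <;> rcases hε 2 with h2 | h2
    · -- ε1 = 1, ε2 = 1 : contradicts he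
      rw [h1, h2] at he
      norm_num +decide [E, EuclideanSpace.single_apply, PiLp.inner_apply,
        Fin.sum_univ_four] at he
    · -- ε1 = 1, ε2 = -1 : the surviving case
      refine Or.inr (Or.inr ⟨ε 3, ε 4, hε 3, hε 4, ?_⟩)
      rw [h1, h2]
      module
    · -- ε1 = -1, ε2 = 1 : contradicts c0
      rw [h1, h2] at c0
      norm_num +decide [E, EuclideanSpace.single_apply] at c0
    · -- ε1 = -1, ε2 = -1 : contradicts he
      rw [h1, h2] at he
      norm_num +decide [E, EuclideanSpace.single_apply, PiLp.inner_apply,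
        Fin.sum_univ_four] at he
private lemma y2_determined {y2 y3 y4 : EuclideanSpace ℝ (Fin 4)}
    (hp2 : IsPosF y2) (hp3 : IsPosF y3) (hp4 : IsPosF y4)
    (hn2 : ⟪y2, y2⟫_ℝ = 2) (hn3 : ⟪y3, y3⟫_ℝ = 1) (hn4 : ⟪y4, y4⟫_ℝ = 1)
    (he2 : ⟪y2, E 4 1 + E 4 2⟫_ℝ = 0) (he3 : ⟪y3, E 4 1 + E 4 2⟫_ℝ = 0)
    (he4 : ⟪y4, E 4 1 + E 4 2⟫_ℝ = 0)
    (h23 : ⟪y2, y3⟫_ℝ = -1) (h24 : ⟪y2, y4⟫_ℝ = 0) (h34 : ⟪y3, y4⟫_ℝ = -1/2) :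
    y2 = E 4 3 - E 4 4 := by
  rcases long_class hp2 hn2 he2 with rfl | rfl | rfl
  · -- y2 = e1 - e2 : impossible
    exfalso
    rcases short_class hp3 hn3 he3 with rfl | rfl | ⟨a, b, ha, hb, rfl⟩ <;>
      norm_num +decide [E, EuclideanSpace.single_apply, PiLp.inner_apply,
        Fin.sum_univ_four] at h23
  · -- y2 = e3 + e4 : impossible
    exfalso
    rcases short_class hp3 hn3 he3 with rfl | rfl | ⟨a, b, ha, hb, rfl⟩
    · norm_num +decide [E, EuclideanSpace.single_apply, PiLp.inner_apply,
        Fin.sum_univ_four] at h23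
    · norm_num +decide [E, EuclideanSpace.single_apply, PiLp.inner_apply,
        Fin.sum_univ_four] at h23
    · rcases ha with rfl | rfl <;> rcases hb with rfl | rfl
      · norm_num +decide [E, EuclideanSpace.single_apply, PiLp.inner_apply,
          Fin.sum_univ_four] at h23
      · norm_num +decide [E, EuclideanSpace.single_apply, PiLp.inner_apply,
          Fin.sum_univ_four] at h23
      · norm_num +decide [E, EuclideanSpace.single_apply, PiLp.inner_apply,
          Fin.sum_univ_four] at h23
      · -- surviving case : a = -1, b = -1, i.e. y3 = (e1-e2-e3-e4)/2
        rcases short_class hp4 hn4 he4 with rfl | rfl | ⟨a', b', ha', hb', rfl⟩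
        · norm_num +decide [E, EuclideanSpace.single_apply, PiLp.inner_apply,
            Fin.sum_univ_four] at h24
        · norm_num +decide [E, EuclideanSpace.single_apply, PiLp.inner_apply,
            Fin.sum_univ_four] at h24
        · rcases ha' with rfl | rfl <;> rcases hb' with rfl | rfl <;>
            first
              | (norm_num +decide [E, EuclideanSpace.single_apply, PiLp.inner_apply,
                  Fin.sum_univ_four] at h24; done)
              | (norm_num +decide [E, EuclideanSpace.single_apply, PiLp.inner_apply,
                  Fin.sum_univ_four] at h34; done)
  · rfl
private lemma inner_alphaF : ⟪alphaF 2, alphaF 2⟫_ℝ = 2 ∧ ⟪alphaF 3, alphaF 3⟫_ℝ = 1 ∧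
    ⟪alphaF 4, alphaF 4⟫_ℝ = 1 ∧ ⟪alphaF 2, alphaF 3⟫_ℝ = -1 ∧ ⟪alphaF 2, alphaF 4⟫_ℝ = 0 ∧
    ⟪alphaF 3, alphaF 4⟫_ℝ = -1/2 ∧ ⟪alphaF 2, E 4 1 + E 4 2⟫_ℝ = 0 ∧
    ⟪alphaF 3, E 4 1 + E 4 2⟫_ℝ = 0 ∧ ⟪alphaF 4, E 4 1 + E 4 2⟫_ℝ = 0 := by
  refine ⟨?_, ?_, ?_, ?_, ?_, ?_, ?_, ?_, ?_⟩ <;>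
    norm_num +decide [alphaF, E, EuclideanSpace.single_apply, PiLp.inner_apply,
      Fin.sum_univ_four]

/-- Type `F₄`: let `v = s₁ ∘ s₂ ∘ s₃ ∘ s₂ ∘ s₄ ∘ s₃ ∘ s₁ ∘ s₂` and let `u` be the longest
element of the parabolic Weyl group generated by `{s₂, s₃, s₄}`.  Then
`v(α₃) = α₁ + 2α₂ + 2α₃ + α₄` and `u(v(α₃)) = α₁ + α₂ + 2α₃ + α₄`. -/
theorem stmt_16
    (u : Equiv.Perm (EuclideanSpace ℝ (Fin 4)))
    (hu : u ∈ Subgroup.closure {g | ∃ j, 2 ≤ j ∧ j ≤ 4 ∧ g = sF j})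
    (hneg : ∀ j, 2 ≤ j → j ≤ 4 → IsNegF (u (alphaF j))) :
    vF (alphaF 3) = alphaF 1 + (2 : ℝ) • alphaF 2 + (2 : ℝ) • alphaF 3 + alphaF 4 ∧
    u (vF (alphaF 3)) = alphaF 1 + alphaF 2 + (2 : ℝ) • alphaF 3 + alphaF 4 := by
  obtain ⟨uadd, usmul, uinner, ufix⟩ := goodF_of_mem hu
  obtain ⟨i22, i33, i44, i23, i24, i34, e2, e3, e4⟩ := inner_alphaF
  refine ⟨vF_alpha3', ?_⟩
  -- the three negated images are positive roots
  have hp2 : IsPosF (-(u (alphaF 2))) := hneg 2 le_rfl (by norm_num)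
  have hp3 : IsPosF (-(u (alphaF 3))) := hneg 3 (by norm_num) (by norm_num)
  have hp4 : IsPosF (-(u (alphaF 4))) := hneg 4 (by norm_num) le_rfl
  -- inner product facts for the negated images
  have key : ∀ j k : ℕ, ⟪-(u (alphaF j)), -(u (alphaF k))⟫_ℝ = ⟪alphaF j, alphaF k⟫_ℝ := by
    intro j k; rw [inner_neg_neg, uinner]
  have keyE : ∀ j : ℕ, ⟪-(u (alphaF j)), E 4 1 + E 4 2⟫_ℝ = -⟪alphaF j, E 4 1 + E 4 2⟫_ℝ := by
    intro j
    rw [inner_neg_left, neg_inj]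
    conv_lhs => rw [← ufix]
    rw [uinner]
  -- pin down u (alphaF 2)
  have h2 : -(u (alphaF 2)) = E 4 3 - E 4 4 := by
    refine y2_determined hp2 hp3 hp4 ?_ ?_ ?_ ?_ ?_ ?_ ?_ ?_ ?_
    · rw [key]; exact i22
    · rw [key]; exact i33
    · rw [key]; exact i44
    · rw [keyE, e2]; norm_num
    · rw [keyE, e3]; norm_num
    · rw [keyE, e4]; norm_num
    · rw [key]; exact i23
    · rw [key]; exact i24
    · rw [key]; exact i34
  have h2' : u (alphaF 2) = -(E 4 3 - E 4 4) := by rw [← h2, neg_neg]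
  -- decompose v(α₃) and apply linearity
  have hx : vF (alphaF 3) = (1/2 : ℝ) • (E 4 1 + E 4 2) + (1/2 : ℝ) • (E 4 3 - E 4 4) := by
    rw [vF_alpha3]; module
  have ha2 : alphaF 2 = E 4 3 - E 4 4 := rfl
  rw [hx, uadd, usmul, usmul, ufix, ← ha2, h2']
  ext k
  fin_cases k <;>
    norm_num +decide [alphaF, E, EuclideanSpace.single_apply]
end
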